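/- arXiv:1806.10045 — 3 statements merged into one kernel-verified Lean document; each statement's English description precedes it below -/
import Mathlib

section
/- If ⟨f, {g_s}⟩ is an MDP homomorphism from M = ⟨S, A, T, R⟩ onto M' = ⟨S', A', T', R'⟩, then for every state-action pair (s,a), the optimal action-value functions satisfy Q*(s,a) = Q'*(f(s), g_s(a)). -/
/-!
The lift `(s, a) ↦ Q'*(f s, g_s a)` of `Q'*` is again a fixed point of the Bellman operator
of `M`: the homomorphism conditions turn the backup of the lift at `(s, a)` into the backup of
`Q'*` at `(f s, g_s a)`, by summing `T` over the fibres of `f` and because the surjective `g_s`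
does not change the maximum over actions. Since `γ < 1`, the Bellman operator is a
contraction for the sup distance, so its fixed point is unique and equals `Q*`.
-/

open Finset
open scoped Classical

/-- Bellman optimality operator for a finite MDP. -/
noncomputable def Bop {S A : Type*} [Fintype S] [Fintype A] [Nonempty A]
    (T : S → A → S → ℝ) (R : S → A → ℝ) (γ : ℝ) (Q : S → A → ℝ) : S → A → ℝ :=
  fun s a => R s a + γ * ∑ s' : S, T s a s' *
    (Finset.univ.sup' Finset.univ_nonempty (fun a' => Q s' a'))

theorem Finset.univ_sup'_comp_of_surjective {α β γ : Type*} [Fintype α] [Fintype β]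
    [Nonempty α] [Nonempty β] [SemilatticeSup γ] {g : α → β} (hg : Function.Surjective g)
    (Q : β → γ) :
    univ.sup' univ_nonempty (fun a => Q (g a)) = univ.sup' univ_nonempty Q := by
  rw [← Function.comp_def, sup'_comp_eq_image]
  exact sup'_congr _ (image_univ_of_surjective hg) fun _ _ => rfl

theorem Finset.dist_sup'_le {ι : Type*} [Fintype ι] {s : Finset ι} (hs : s.Nonempty)
    (f g : ι → ℝ) : dist (s.sup' hs f) (s.sup' hs g) ≤ dist f g := by
  have key : ∀ f g : ι → ℝ, s.sup' hs f ≤ s.sup' hs g + dist f g := fun f g =>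
    sup'_le _ _ fun i hi => calc
      f i ≤ g i + dist f g := by
        have := (Real.dist_eq _ _ ▸ dist_le_pi_dist f g i : |f i - g i| ≤ dist f g)
        linarith [le_abs_self (f i - g i)]
      _ ≤ s.sup' hs g + dist f g := by gcongr; exact le_sup' g hi
  rw [Real.dist_eq, abs_sub_le_iff]
  constructor
  · linarith [key f g]
  · linarith [key g f, dist_comm f g]

section Bellman

variable {S A : Type*} [Fintype S] [Fintype A] [Nonempty A]
  {T : S → A → S → ℝ} {R : S → A → ℝ} {γ : ℝ}

theorem dist_Bop_le (hγ0 : 0 ≤ γ) (hTnn : ∀ s a s', 0 ≤ T s a s')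
    (hTsum : ∀ s a, ∑ s' : S, T s a s' ≤ 1) (Q₁ Q₂ : S → A → ℝ) :
    dist (Bop T R γ Q₁) (Bop T R γ Q₂) ≤ γ * dist Q₁ Q₂ := by
  have hd : 0 ≤ γ * dist Q₁ Q₂ := mul_nonneg hγ0 dist_nonneg
  refine (dist_pi_le_iff hd).2 fun s => (dist_pi_le_iff hd).2 fun a => ?_
  set V : (S → A → ℝ) → S → ℝ := fun Q s' => univ.sup' univ_nonempty (Q s')
  have hV : ∀ s', |V Q₁ s' - V Q₂ s'| ≤ dist Q₁ Q₂ := fun s' =>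
    ((Real.dist_eq _ _).symm.le.trans (dist_sup'_le _ _ _)).trans (dist_le_pi_dist Q₁ Q₂ s')
  have hsum : |∑ s', T s a s' * (V Q₁ s' - V Q₂ s')| ≤ dist Q₁ Q₂ := calc
    _ ≤ ∑ s', T s a s' * |V Q₁ s' - V Q₂ s'| := by
      refine (abs_sum_le_sum_abs _ _).trans_eq (sum_congr rfl fun s' _ => ?_)
      rw [abs_mul, abs_of_nonneg (hTnn s a s')]
    _ ≤ ∑ s', T s a s' * dist Q₁ Q₂ := by gcongr with s' _; exacts [hTnn s a s', hV s']
    _ ≤ dist Q₁ Q₂ := by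
      rw [← sum_mul]; exact mul_le_of_le_one_left dist_nonneg (hTsum s a)
  have hdiff : Bop T R γ Q₁ s a - Bop T R γ Q₂ s a
      = γ * ∑ s', T s a s' * (V Q₁ s' - V Q₂ s') := by
    simp only [Bop, V, mul_sub, sum_sub_distrib]; ring
  rw [Real.dist_eq, hdiff, abs_mul, abs_of_nonneg hγ0]
  exact mul_le_mul_of_nonneg_left hsum hγ0

theorem Bop_fixedPoint_unique (hγ0 : 0 ≤ γ) (hγ1 : γ < 1) (hTnn : ∀ s a s', 0 ≤ T s a s')
    (hTsum : ∀ s a, ∑ s' : S, T s a s' ≤ 1) {Q₁ Q₂ : S → A → ℝ}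
    (h₁ : Bop T R γ Q₁ = Q₁) (h₂ : Bop T R γ Q₂ = Q₂) : Q₁ = Q₂ := by
  have hcontract := dist_Bop_le (R := R) hγ0 hTnn hTsum Q₁ Q₂
  rw [h₁, h₂] at hcontract
  exact dist_le_zero.1 (by nlinarith [dist_nonneg (x := Q₁) (y := Q₂)])

theorem Bop_lift {S' A' : Type*} [Fintype S'] [Fintype A'] [Nonempty A']
    {T' : S' → A' → S' → ℝ} {R' : S' → A' → ℝ} {f : S → S'} {g : S → A → A'}
    (hgsurj : ∀ s, Function.Surjective (g s))
    (hT : ∀ s a s', T' (f s) (g s a) s' = ∑ x ∈ univ.filter (fun x => f x = s'), T s a x)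
    (hR : ∀ s a, R' (f s) (g s a) = R s a) (Q' : S' → A' → ℝ) :
    Bop T R γ (fun s a => Q' (f s) (g s a)) = fun s a => Bop T' R' γ Q' (f s) (g s a) := by
  funext s a
  simp only [Bop, hR, univ_sup'_comp_of_surjective (hgsurj _), hT, sum_mul]
  rw [← sum_fiberwise univ f]
  refine congrArg _ (congrArg _ (sum_congr rfl fun t _ => sum_congr rfl fun x hx => ?_))
  rw [(mem_filter.1 hx).2]

end Bellman

theorem optimal_value_equivalence_general
    {S A S' A' : Type*} [Fintype S] [Fintype A] [Fintype S'] [Fintype A']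
    [Nonempty A] [Nonempty A']
    (T : S → A → S → ℝ) (R : S → A → ℝ)
    (T' : S' → A' → S' → ℝ) (R' : S' → A' → ℝ)
    (γ : ℝ) (hγ0 : 0 ≤ γ) (hγ1 : γ < 1)
    (hTnn : ∀ s a s'', 0 ≤ T s a s'') (hTsum : ∀ s a, ∑ s'' : S, T s a s'' = 1)
    (f : S → S') (g : S → A → A')
    (hgsurj : ∀ s, Function.Surjective (g s))
    (hT : ∀ s a s', T' (f s) (g s a) s' = ∑ x ∈ Finset.univ.filter (fun x => f x = s'), T s a x)
    (hR : ∀ s a, R' (f s) (g s a) = R s a)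
    (Qstar : S → A → ℝ) (hQstar : Bop T R γ Qstar = Qstar)
    (Q'star : S' → A' → ℝ) (hQ'star : Bop T' R' γ Q'star = Q'star) :
    ∀ s a, Qstar s a = Q'star (f s) (g s a) := by
  have hlift : Bop T R γ (fun s a => Q'star (f s) (g s a)) = fun s a => Q'star (f s) (g s a) := by
    rw [Bop_lift hgsurj hT hR, hQ'star]
  have hunique := Bop_fixedPoint_unique hγ0 hγ1 hTnn (fun s a => (hTsum s a).le) hQstar hlift
  exact fun s a => congrFun (congrFun hunique s) a

/-- Ravindran's optimal value equivalence: under an MDP homomorphism,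
`Q*(s,a) = Q'*(f s, g_s a)`. -/
theorem optimal_value_equivalence
    {S A S' A' : Type*} [Fintype S] [Fintype A] [Fintype S'] [Fintype A']
    [Nonempty S] [Nonempty A] [Nonempty S'] [Nonempty A']
    (T : S → A → S → ℝ) (R : S → A → ℝ)
    (T' : S' → A' → S' → ℝ) (R' : S' → A' → ℝ)
    (γ : ℝ) (hγ0 : 0 ≤ γ) (hγ1 : γ < 1)
    (hTnn : ∀ s a s'', 0 ≤ T s a s'') (hTsum : ∀ s a, ∑ s'' : S, T s a s'' = 1)
    (hT'nn : ∀ s a s'', 0 ≤ T' s a s'') (hT'sum : ∀ s a, ∑ s'' : S', T' s a s'' = 1)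
    (f : S → S') (g : S → A → A')
    (hfsurj : Function.Surjective f) (hgsurj : ∀ s, Function.Surjective (g s))
    (hT : ∀ s a s', T' (f s) (g s a) s' = ∑ x ∈ Finset.univ.filter (fun x => f x = s'), T s a x)
    (hR : ∀ s a, R' (f s) (g s a) = R s a)
    (Qstar : S → A → ℝ) (hQstar : Bop T R γ Qstar = Qstar)
    (Q'star : S' → A' → ℝ) (hQ'star : Bop T' R' γ Q'star = Q'star) :
    ∀ s a, Qstar s a = Q'star (f s) (g s a) :=
  optimal_value_equivalence_general T R T' R' γ hγ0 hγ1 hTnn hTsum f g hgsurj hT hR Qstar hQstar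
    Q'star hQ'star
end

section
/- If ⟨f, {g_s}⟩ is an MDP homomorphism from M onto M', then for every function Q' : S' × A' → ℝ, the pullback Q(s,a) := Q'(f(s), g_s(a)) satisfies: applying the Bellman optimality operator of M to Q equals the pullback of applying the Bellman optimality operator of M' to Q'. That is, the Bellman operators commute with the pullback along the homomorphism. -/
open Finset
open scoped Classical

/-!
Surjectivity of each `g s` makes the maximum of the pulled-back `Q'` over `A` equal to the
maximum of `Q'` over `A'`, and `hT` says that `T' (f s) (g s a)` is the pushforward of
`T s a` along `f`; summing over `S` fibre by fibre of `f` then turns the expected next value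
in `M` into the one in `M'`.
-/

namespace Finset

theorem sup'_univ_comp_of_surjective {ι κ α : Type*} [Fintype ι] [Fintype κ] [Nonempty ι]
    [Nonempty κ] [SemilatticeSup α] {g : ι → κ} (hg : Function.Surjective g) (φ : κ → α) :
    univ.sup' univ_nonempty (φ ∘ g) = univ.sup' univ_nonempty φ :=
  calc univ.sup' univ_nonempty (φ ∘ g)
      = (univ.image g).sup' (univ_nonempty.image g) φ := (sup'_image ..).symm
    _ = univ.sup' univ_nonempty φ := sup'_congr _ (image_univ_of_surjective hg) fun _ _ ↦ rfl

theorem sum_mul_comp_eq_sum_fiber_mul {ι κ R : Type*} [Fintype ι] [Fintype κ]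
    [NonUnitalNonAssocSemiring R] (f : ι → κ) (w : ι → R) (φ : κ → R) :
    ∑ x, w x * φ (f x) = ∑ y, (∑ x with f x = y, w x) * φ y := by
  rw [← sum_fiberwise univ f]
  refine sum_congr rfl fun y _ ↦ ?_
  rw [sum_mul]
  exact sum_congr rfl fun x hx ↦ by rw [(mem_filter.1 hx).2]

end Finset

theorem bellman_commutes_with_pullback_general
    {S A S' A' : Type*} [Fintype S] [Fintype A] [Fintype S'] [Fintype A']
    [Nonempty A] [Nonempty A']
    (T : S → A → S → ℝ) (R : S → A → ℝ)
    (T' : S' → A' → S' → ℝ) (R' : S' → A' → ℝ)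
    (γ : ℝ)
    (f : S → S') (g : S → A → A')
    (hgsurj : ∀ s, Function.Surjective (g s))
    (hT : ∀ s a s', T' (f s) (g s a) s' = ∑ x ∈ Finset.univ.filter (fun x => f x = s'), T s a x)
    (hR : ∀ s a, R' (f s) (g s a) = R s a) :
    ∀ Q' : S' → A' → ℝ,
      Bop T R γ (fun s a => Q' (f s) (g s a)) =
      fun s a => Bop T' R' γ Q' (f s) (g s a) := by
  intro Q'
  funext s a
  have hmax (x : S) : univ.sup' univ_nonempty (fun b => Q' (f x) (g x b)) =
      univ.sup' univ_nonempty (Q' (f x)) :=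
    sup'_univ_comp_of_surjective (hgsurj x) (Q' (f x))
  simp only [Bop, hR, hT, hmax]
  rw [sum_mul_comp_eq_sum_fiber_mul f (T s a) fun y ↦ univ.sup' univ_nonempty (Q' y)]

/-- The Bellman optimality operators commute with the pullback along an MDP homomorphism. -/
theorem bellman_commutes_with_pullback
    {S A S' A' : Type*} [Fintype S] [Fintype A] [Fintype S'] [Fintype A']
    [Nonempty S] [Nonempty A] [Nonempty S'] [Nonempty A']
    (T : S → A → S → ℝ) (R : S → A → ℝ)
    (T' : S' → A' → S' → ℝ) (R' : S' → A' → ℝ)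
    (γ : ℝ)
    (f : S → S') (g : S → A → A')
    (hfsurj : Function.Surjective f) (hgsurj : ∀ s, Function.Surjective (g s))
    (hT : ∀ s a s', T' (f s) (g s a) s' = ∑ x ∈ Finset.univ.filter (fun x => f x = s'), T s a x)
    (hR : ∀ s a, R' (f s) (g s a) = R s a) :
    ∀ Q' : S' → A' → ℝ,
      Bop T R γ (fun s a => Q' (f s) (g s a)) =
      fun s a => Bop T' R' γ Q' (f s) (g s a) :=
  bellman_commutes_with_pullback_general T R T' R' γ f g hgsurj hT hR
end

section
/- If ⟨f, {g_s}⟩ is an MDP homomorphism from M onto M' and s₁, s₂ ∈ S satisfy f(s₁) = f(s₂), then V*(s₁) = V*(s₂); i.e., the optimal value function is constant on the fibers of f. -/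
open Finset
open scoped Classical

/-!
Call state-action pairs `(x, a)` and `(y, b)` matched when `f x = f y` and `g x a = g y b`.
Let `E` be the largest gap `Q* x a - Q* y b` over matched pairs. Matched pairs have equal rewards
and push forward to the same distribution over fibers of `f`, so applying the Bellman equation
bounds each gap by `γ E`; hence `E ≤ γ E`, i.e. `E ≤ 0`. Surjectivity of the `g s` then lets every
action at `x` be matched by one at `y`, so `V* x ≤ V* y` whenever `f x = f y`.
-/

open Function

lemma sum_mul_sub_sum_mul_le_of_sum_eq {ι : Type*} (F : Finset ι) {p q V : ι → ℝ} {E : ℝ}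
    (hp : ∀ i ∈ F, 0 ≤ p i) (hq : ∀ i ∈ F, 0 ≤ q i) (hpq : ∑ i ∈ F, p i = ∑ i ∈ F, q i)
    (hV : ∀ i ∈ F, ∀ j ∈ F, V i ≤ V j + E) :
    ∑ i ∈ F, p i * V i - ∑ i ∈ F, q i * V i ≤ (∑ i ∈ F, p i) * E := by
  rcases F.eq_empty_or_nonempty with rfl | hF
  · simp
  obtain ⟨j, hj, hmin⟩ := F.exists_min_image V hF
  have hupper : ∑ i ∈ F, p i * V i ≤ (∑ i ∈ F, p i) * (V j + E) := by
    rw [sum_mul]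
    exact sum_le_sum fun i hi => mul_le_mul_of_nonneg_left (hV i hi j hj) (hp i hi)
  have hlower : (∑ i ∈ F, q i) * V j ≤ ∑ i ∈ F, q i * V i := by
    rw [sum_mul]
    exact sum_le_sum fun i hi => mul_le_mul_of_nonneg_left (hmin i hi) (hq i hi)
  rw [← hpq] at hlower
  linarith

lemma sum_mul_sub_sum_mul_le_of_fiberwise_sum_eq {ι κ : Type*} [Fintype ι] (f : ι → κ)
    {p q V : ι → ℝ} {E : ℝ} (hp : ∀ i, 0 ≤ p i) (hq : ∀ i, 0 ≤ q i) (hp1 : ∑ i, p i = 1)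
    (hpq : ∀ k, ∑ i with f i = k, p i = ∑ i with f i = k, q i)
    (hV : ∀ i j, f i = f j → V i ≤ V j + E) :
    ∑ i, p i * V i - ∑ i, q i * V i ≤ E := by
  have hmaps : ∀ i ∈ univ, f i ∈ univ.image f := fun i _ => mem_image_of_mem f (mem_univ i)
  calc ∑ i, p i * V i - ∑ i, q i * V i
      = ∑ k ∈ univ.image f, (∑ i with f i = k, p i * V i - ∑ i with f i = k, q i * V i) := by
        rw [sum_sub_distrib, sum_fiberwise_of_maps_to hmaps, sum_fiberwise_of_maps_to hmaps]
    _ ≤ ∑ k ∈ univ.image f, (∑ i with f i = k, p i) * E := by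
        gcongr with k
        refine sum_mul_sub_sum_mul_le_of_sum_eq _ (fun i _ => hp i) (fun i _ => hq i) (hpq k) ?_
        intro i hi j hj
        exact hV i j ((mem_filter.1 hi).2.trans (mem_filter.1 hj).2.symm)
    _ = E := by rw [← sum_mul, sum_fiberwise_of_maps_to hmaps, hp1, one_mul]

lemma sup'_univ_le_sup'_univ_add {α β : Type*} [Fintype α] [Nonempty α] [Fintype β] [Nonempty β]
    {u : α → ℝ} {v : β → ℝ} {E : ℝ} (h : ∀ a, ∃ b, u a ≤ v b + E) :
    univ.sup' univ_nonempty u ≤ univ.sup' univ_nonempty v + E :=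
  sup'_le _ _ fun a _ =>
    let ⟨b, hb⟩ := h a
    hb.trans (by gcongr; exact le_sup' v (mem_univ b))

section

variable {S A S' A' : Type*} [Fintype A] [Nonempty A]

noncomputable def stateValue (Q : S → A → ℝ) (s : S) : ℝ := univ.sup' univ_nonempty (Q s)

def Matched (f : S → S') (g : S → A → A') (x : S) (a : A) (y : S) (b : A) : Prop :=
  f x = f y ∧ g x a = g y b

variable {T : S → A → S → ℝ} {R : S → A → ℝ} {γ : ℝ} {Q : S → A → ℝ}
  {f : S → S'} {g : S → A → A'}

lemma stateValue_le_add_of_matched (hg : ∀ s, Surjective (g s)) {E : ℝ}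
    (hE : ∀ x a y b, Matched f g x a y b → Q x a ≤ Q y b + E) {x y : S} (hxy : f x = f y) :
    stateValue Q x ≤ stateValue Q y + E :=
  sup'_univ_le_sup'_univ_add fun a =>
    let ⟨b, hb⟩ := hg y (g x a)
    ⟨b, hE x a y b ⟨hxy, hb.symm⟩⟩

variable [Fintype S]

lemma eq_reward_add_stateValue_of_Bop_eq (hQ : Bop T R γ Q = Q) (s : S) (a : A) :
    Q s a = R s a + γ * ∑ s', T s a s' * stateValue Q s' :=
  (congrFun (congrFun hQ s) a).symm

lemma le_add_mul_of_matched_of_Bop_eq (hQ : Bop T R γ Q = Q) (hγ : 0 ≤ γ)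
    (hTnn : ∀ s a s', 0 ≤ T s a s') (hTsum : ∀ s a, ∑ s', T s a s' = 1)
    (hg : ∀ s, Surjective (g s))
    (hR : ∀ x a y b, Matched f g x a y b → R x a = R y b)
    (hT : ∀ x a y b, Matched f g x a y b →
      ∀ s', ∑ z with f z = s', T x a z = ∑ z with f z = s', T y b z)
    {E : ℝ} (hE : ∀ x a y b, Matched f g x a y b → Q x a ≤ Q y b + E)
    {x : S} {a : A} {y : S} {b : A} (hm : Matched f g x a y b) :
    Q x a ≤ Q y b + γ * E := by
  have hnext : ∑ s', T x a s' * stateValue Q s' - ∑ s', T y b s' * stateValue Q s' ≤ E :=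
    sum_mul_sub_sum_mul_le_of_fiberwise_sum_eq f (hTnn x a) (hTnn y b) (hTsum x a) (hT x a y b hm)
      fun _ _ => stateValue_le_add_of_matched hg hE
  rw [eq_reward_add_stateValue_of_Bop_eq hQ x a, eq_reward_add_stateValue_of_Bop_eq hQ y b,
    hR x a y b hm]
  linarith [mul_le_mul_of_nonneg_left hnext hγ]

lemma le_of_matched_of_Bop_eq (hQ : Bop T R γ Q = Q) (hγ0 : 0 ≤ γ) (hγ1 : γ < 1)
    (hTnn : ∀ s a s', 0 ≤ T s a s') (hTsum : ∀ s a, ∑ s', T s a s' = 1)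
    (hg : ∀ s, Surjective (g s))
    (hR : ∀ x a y b, Matched f g x a y b → R x a = R y b)
    (hT : ∀ x a y b, Matched f g x a y b →
      ∀ s', ∑ z with f z = s', T x a z = ∑ z with f z = s', T y b z)
    {x : S} {a : A} {y : S} {b : A} (hm : Matched f g x a y b) :
    Q x a ≤ Q y b := by
  let pairs := univ.filter fun p : (S × A) × (S × A) => Matched f g p.1.1 p.1.2 p.2.1 p.2.2
  have hne : pairs.Nonempty := ⟨((x, a), (x, a)), mem_filter.2 ⟨mem_univ _, rfl, rfl⟩⟩
  set E := pairs.sup' hne fun p => Q p.1.1 p.1.2 - Q p.2.1 p.2.2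
  have hgap : ∀ x a y b, Matched f g x a y b → Q x a ≤ Q y b + E := fun x a y b hm => by
    have := le_sup' (fun p => Q p.1.1 p.1.2 - Q p.2.1 p.2.2)
      (mem_filter.2 ⟨mem_univ ((x, a), (y, b)), hm⟩ : ((x, a), (y, b)) ∈ pairs)
    linarith
  have hcontract : E ≤ γ * E := sup'_le _ _ fun p hp => by
    have := le_add_mul_of_matched_of_Bop_eq hQ hγ0 hTnn hTsum hg hR hT hgap (mem_filter.1 hp).2
    linarith
  have hE : E ≤ 0 := by nlinarith
  linarith [hgap x a y b hm]

end

theorem optimal_value_constant_on_fibers_general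
    {S A S' A' : Type*} [Fintype S] [Fintype A]
    [Nonempty A]
    (T : S → A → S → ℝ) (R : S → A → ℝ)
    (T' : S' → A' → S' → ℝ) (R' : S' → A' → ℝ)
    (γ : ℝ) (hγ0 : 0 ≤ γ) (hγ1 : γ < 1)
    (hTnn : ∀ s a s'', 0 ≤ T s a s'') (hTsum : ∀ s a, ∑ s'' : S, T s a s'' = 1)
    (f : S → S') (g : S → A → A')
    (hgsurj : ∀ s, Function.Surjective (g s))
    (hT : ∀ s a s', T' (f s) (g s a) s' = ∑ x ∈ Finset.univ.filter (fun x => f x = s'), T s a x)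
    (hR : ∀ s a, R' (f s) (g s a) = R s a)
    (Qstar : S → A → ℝ) (hQstar : Bop T R γ Qstar = Qstar)
    (s₁ s₂ : S) (hfib : f s₁ = f s₂) :
    Finset.univ.sup' Finset.univ_nonempty (fun a => Qstar s₁ a) =
      Finset.univ.sup' Finset.univ_nonempty (fun a => Qstar s₂ a) := by
  have hRm : ∀ x a y b, Matched f g x a y b → R x a = R y b := fun x a y b ⟨hf, hg⟩ => by
    rw [← hR x a, ← hR y b, hf, hg]
  have hTm : ∀ x a y b, Matched f g x a y b →
      ∀ s', ∑ z with f z = s', T x a z = ∑ z with f z = s', T y b z := fun x a y b ⟨hf, hg⟩ s' => by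
    rw [← hT x a s', ← hT y b s', hf, hg]
  have hmatched : ∀ x a y b, Matched f g x a y b → Qstar x a ≤ Qstar y b + 0 := fun _ _ _ _ hm => by
    simpa using le_of_matched_of_Bop_eq hQstar hγ0 hγ1 hTnn hTsum hgsurj hRm hTm hm
  have h₁₂ := stateValue_le_add_of_matched hgsurj hmatched hfib
  have h₂₁ := stateValue_le_add_of_matched hgsurj hmatched hfib.symm
  exact le_antisymm (h₁₂.trans_eq (add_zero _)) (h₂₁.trans_eq (add_zero _))

/-- Under an MDP homomorphism, the optimal value function is constant on the fibers of `f`. -/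
theorem optimal_value_constant_on_fibers
    {S A S' A' : Type*} [Fintype S] [Fintype A] [Fintype S'] [Fintype A']
    [Nonempty S] [Nonempty A] [Nonempty S'] [Nonempty A']
    (T : S → A → S → ℝ) (R : S → A → ℝ)
    (T' : S' → A' → S' → ℝ) (R' : S' → A' → ℝ)
    (γ : ℝ) (hγ0 : 0 ≤ γ) (hγ1 : γ < 1)
    (hTnn : ∀ s a s'', 0 ≤ T s a s'') (hTsum : ∀ s a, ∑ s'' : S, T s a s'' = 1)
    (hT'nn : ∀ s a s'', 0 ≤ T' s a s'') (hT'sum : ∀ s a, ∑ s'' : S', T' s a s'' = 1)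
    (f : S → S') (g : S → A → A')
    (hfsurj : Function.Surjective f) (hgsurj : ∀ s, Function.Surjective (g s))
    (hT : ∀ s a s', T' (f s) (g s a) s' = ∑ x ∈ Finset.univ.filter (fun x => f x = s'), T s a x)
    (hR : ∀ s a, R' (f s) (g s a) = R s a)
    (Qstar : S → A → ℝ) (hQstar : Bop T R γ Qstar = Qstar)
    (s₁ s₂ : S) (hfib : f s₁ = f s₂) :
    Finset.univ.sup' Finset.univ_nonempty (fun a => Qstar s₁ a) =
      Finset.univ.sup' Finset.univ_nonempty (fun a => Qstar s₂ a) :=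
  optimal_value_constant_on_fibers_general T R T' R' γ hγ0 hγ1 hTnn hTsum f g hgsurj hT hR Qstar
    hQstar s₁ s₂ hfib
end
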